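/- Let T be an infinite rooted tree, ψ : T → ℂ, m ≠ n natural numbers. The multiplication operator M_ψ : L^(m) → L^(n) is bounded if and only if both μ_{ψ,m,n} = sup_{v≠o} |ψ'(v)|ℓ_m(|v|)Λ_n(|v|) < ∞ and ν_{ψ,m,n} = sup_{v≠o} |ψ(v⁻)|Λ_n(|v|)/Λ_m(|v|) < ∞; moreover ‖ψ‖_n ≤ ‖M_ψ‖ ≤ |ψ(o)| + μ_{ψ,m,n} + ν_{ψ,m,n}. -/

import Mathlib

open Real Filter

/-- Iterated logarithm: ℓ₀(x) = x, ℓ_{j+1}(x) = 1 + log ℓ_j(x). -/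
noncomputable def ell : ℕ → ℝ → ℝ
  | 0, x => x
  | j + 1, x => 1 + Real.log (ell j x)

/-- Λ_k(x) = ∏_{j=0}^{k-1} ℓ_j(x). -/
noncomputable def Lam (k : ℕ) (x : ℝ) : ℝ := ∏ j ∈ Finset.range k, ell j x

/-- Discrete derivative of f on a rooted tree given by a parent map:
`f v - f (parent v)` (automatically 0 at the root since `parent o = o`). -/
def Der {V : Type*} (parent : V → V) (f : V → ℂ) (v : V) : ℂ := f v - f (parent v)

/-- The set of values |f'(v)|·Λ_k(|v|) over v ≠ o; f ∈ L^(k) iff this set is bounded above. -/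
def lipSet {V : Type*} (o : V) (parent : V → V) (depth : V → ℕ) (k : ℕ) (f : V → ℂ) : Set ℝ :=
  {r | ∃ v, v ≠ o ∧ r = ‖Der parent f v‖ * Lam k (depth v)}

/-- ‖f‖_k = |f(o)| + sup_{v ≠ o} |f'(v)|·Λ_k(|v|). -/
noncomputable def lipNorm {V : Type*} (o : V) (parent : V → V) (depth : V → ℕ) (k : ℕ)
    (f : V → ℂ) : ℝ :=
  ‖f o‖ + sSup (lipSet o parent depth k f)

/-!
Sufficiency: by the Leibniz rule `(ψf)'(v) = ψ'(v) f(v) + ψ(v⁻) f'(v)`, and every `f ∈ L^(m)`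
satisfies `|f(v)| ≤ ‖f‖_m ℓ_m(|v|)`, obtained by summing `|f'| ≤ ‖f‖_m / Λ_m` along the path to the
root and comparing with `ℓ_m' = 1 / Λ_m` through the mean value theorem.

Necessity: testing `M_ψ` on the constant `1` gives `‖ψ‖_n ≤ ‖M_ψ‖`. The truncations
`g_N = ℓ_m(min(|·|, N))` have `‖g_N‖_m ≤ 1 + 2^m` because `Λ_m(d + 1) ≤ 2^m Λ_m(d)`. At a vertex `v`
of depth `N + 1`, `(ψ g_N)'(v) = ψ'(v) ℓ_m(N)` bounds `μ`, and then
`(ψ g_{N+1})'(v) = ψ'(v) ℓ_m(N + 1) + ψ(v⁻) (ℓ_m(N + 1) - ℓ_m(N))` with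
`ℓ_m(N + 1) - ℓ_m(N) ≥ 1 / Λ_m(N + 1)` bounds `ν`.
-/

lemma one_le_ell (j : ℕ) {x : ℝ} (hx : 1 ≤ x) : 1 ≤ ell j x := by
  induction j with
  | zero => exact hx
  | succ j ih => exact le_add_of_nonneg_right (Real.log_nonneg ih)

lemma ell_le_ell (j : ℕ) {x y : ℝ} (hx : 1 ≤ x) (hxy : x ≤ y) : ell j x ≤ ell j y := by
  induction j with
  | zero => exact hxy
  | succ j ih =>
    have := Real.log_le_log (zero_lt_one.trans_le (one_le_ell j hx)) ih
    show 1 + Real.log (ell j x) ≤ 1 + Real.log (ell j y)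
    linarith

lemma ell_one (j : ℕ) : ell j 1 = 1 := by
  induction j with
  | zero => rfl
  | succ j ih => simp [ell, ih]

lemma ell_succ_zero (j : ℕ) : ell (j + 1) 0 = 1 := by
  induction j with
  | zero => simp [ell]
  | succ j ih => rw [ell, ih, Real.log_one, add_zero]

lemma ell_zero_le_one (j : ℕ) : ell j 0 ≤ 1 := by
  cases j with
  | zero => simp [ell]
  | succ j => rw [ell_succ_zero]

lemma ell_natCast_nonneg (j d : ℕ) : 0 ≤ ell j d := by
  rcases Nat.eq_zero_or_pos d with rfl | hd
  · cases j with
    | zero => simp [ell]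
    | succ j => simp [ell_succ_zero]
  · exact zero_le_one.trans (one_le_ell j (by exact_mod_cast hd))

lemma one_le_Lam (k : ℕ) {x : ℝ} (hx : 1 ≤ x) : 1 ≤ Lam k x :=
  Finset.one_le_prod fun j _ => one_le_ell j hx

lemma Lam_pos (k : ℕ) {x : ℝ} (hx : 1 ≤ x) : 0 < Lam k x :=
  zero_lt_one.trans_le (one_le_Lam k hx)

lemma Lam_le_Lam (k : ℕ) {x y : ℝ} (hx : 1 ≤ x) (hxy : x ≤ y) : Lam k x ≤ Lam k y :=
  Finset.prod_le_prod (fun j _ => zero_le_one.trans (one_le_ell j hx))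
    fun j _ => ell_le_ell j hx hxy

lemma Lam_one (k : ℕ) : Lam k 1 = 1 :=
  Finset.prod_eq_one fun j _ => ell_one j

lemma Lam_natCast_nonneg (k d : ℕ) : 0 ≤ Lam k d :=
  Finset.prod_nonneg fun j _ => ell_natCast_nonneg j d

lemma hasDerivAt_ell (m : ℕ) {x : ℝ} (hx : 1 ≤ x) : HasDerivAt (ell m) (Lam m x)⁻¹ x := by
  induction m with
  | zero => exact (hasDerivAt_id' x).congr_deriv (by simp [Lam])
  | succ m ih =>
    have hlog := (Real.hasDerivAt_log (zero_lt_one.trans_le (one_le_ell m hx)).ne').comp x ih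
    exact (hlog.const_add 1).congr_deriv
      (by simp only [Lam, Finset.prod_range_succ, mul_inv, mul_comm])

lemma exists_ell_add_one_sub_eq (m : ℕ) {a : ℝ} (ha : 1 ≤ a) :
    ∃ c ∈ Set.Ioo a (a + 1), ell m (a + 1) - ell m a = (Lam m c)⁻¹ := by
  have hderiv : ∀ x ∈ Set.Icc a (a + 1), HasDerivAt (ell m) (Lam m x)⁻¹ x :=
    fun x hx => hasDerivAt_ell m (ha.trans hx.1)
  obtain ⟨c, hc, hslope⟩ := exists_hasDerivAt_eq_slope (ell m) (fun x => (Lam m x)⁻¹)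
    (lt_add_one a) (fun x hx => (hderiv x hx).continuousAt.continuousWithinAt)
    fun x hx => hderiv x (Set.Ioo_subset_Icc_self hx)
  exact ⟨c, hc, by rw [hslope, add_sub_cancel_left, div_one]⟩

lemma inv_Lam_add_one_le_ell_sub (m : ℕ) {a : ℝ} (ha : 1 ≤ a) :
    (Lam m (a + 1))⁻¹ ≤ ell m (a + 1) - ell m a := by
  obtain ⟨c, hc, hc_eq⟩ := exists_ell_add_one_sub_eq m ha
  have hc1 : 1 ≤ c := ha.trans hc.1.le
  rw [hc_eq]
  exact inv_anti₀ (Lam_pos m hc1) (Lam_le_Lam m hc1 hc.2.le)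

lemma ell_add_one_sub_le_inv_Lam (m : ℕ) {a : ℝ} (ha : 1 ≤ a) :
    ell m (a + 1) - ell m a ≤ (Lam m a)⁻¹ := by
  obtain ⟨c, hc, hc_eq⟩ := exists_ell_add_one_sub_eq m ha
  rw [hc_eq]
  exact inv_anti₀ (Lam_pos m ha) (Lam_le_Lam m ha hc.1.le)

lemma ell_add_one_le (m : ℕ) {a : ℝ} (ha : 1 ≤ a) : ell m (a + 1) ≤ ell m a + 1 := by
  have := ell_add_one_sub_le_inv_Lam m ha
  have := inv_le_one_of_one_le₀ (one_le_Lam m ha)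
  linarith

lemma Lam_add_one_le (m : ℕ) {a : ℝ} (ha : 1 ≤ a) : Lam m (a + 1) ≤ 2 ^ m * Lam m a := by
  calc Lam m (a + 1) ≤ ∏ j ∈ Finset.range m, 2 * ell j a :=
        Finset.prod_le_prod (fun j _ => zero_le_one.trans (one_le_ell j (by linarith)))
          fun j _ => by linarith [ell_add_one_le j ha, one_le_ell j ha]
    _ = 2 ^ m * Lam m a := by
        rw [Finset.prod_mul_distrib, Finset.prod_const, Finset.card_range, Lam]

lemma ell_natCast_add_one_le (m d : ℕ) : ell m ((d : ℝ) + 1) ≤ ell m d + 1 := by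
  rcases Nat.eq_zero_or_pos d with rfl | hd
  · simpa [ell_one] using ell_natCast_nonneg m 0
  · exact ell_add_one_le m (by exact_mod_cast hd)

lemma abs_ell_natCast_add_one_sub_mul_Lam_le (m d : ℕ) :
    |ell m ((d : ℝ) + 1) - ell m d| * Lam m ((d : ℝ) + 1) ≤ 2 ^ m := by
  rcases Nat.eq_zero_or_pos d with rfl | hd
  · have h0 := ell_natCast_nonneg m 0
    have h1 := ell_zero_le_one m
    simp only [Nat.cast_zero, zero_add, ell_one, Lam_one, mul_one] at h0 h1 ⊢
    rw [abs_of_nonneg (by linarith)]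
    linarith [one_le_pow₀ (M₀ := ℝ) (n := m) one_le_two]
  · have ha : (1 : ℝ) ≤ d := by exact_mod_cast hd
    have hLpos := Lam_pos m ha
    have hlow := inv_Lam_add_one_le_ell_sub m ha
    have hup := ell_add_one_sub_le_inv_Lam m ha
    rw [abs_of_nonneg ((inv_nonneg.2 (Lam_pos m (by linarith)).le).trans hlow)]
    calc (ell m ((d : ℝ) + 1) - ell m d) * Lam m ((d : ℝ) + 1)
        ≤ (Lam m d)⁻¹ * (2 ^ m * Lam m d) :=
          mul_le_mul hup (Lam_add_one_le m ha) (Lam_pos m (by linarith)).le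
            (inv_nonneg.2 hLpos.le)
      _ = 2 ^ m := by field_simp

section Tree

variable {V : Type*} {o : V} {parent : V → V} {depth : V → ℕ}

lemma depth_eq_zero_iff (hdepth0 : depth o = 0)
    (hdepth : ∀ v, v ≠ o → depth v = depth (parent v) + 1) {v : V} : depth v = 0 ↔ v = o := by
  refine ⟨fun h => ?_, fun h => h ▸ hdepth0⟩
  by_contra hv
  rw [hdepth v hv] at h
  omega

lemma one_le_depth (hdepth : ∀ v, v ≠ o → depth v = depth (parent v) + 1) {v : V}
    (hv : v ≠ o) : (1 : ℝ) ≤ depth v := by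
  rw [hdepth v hv]
  exact_mod_cast Nat.le_add_left 1 _

lemma Der_mul (ψ f : V → ℂ) (v : V) :
    Der parent (fun x => ψ x * f x) v = Der parent ψ v * f v + ψ (parent v) * Der parent f v := by
  simp only [Der]
  ring

lemma nonneg_of_mem_lipSet {k : ℕ} {f : V → ℂ} {r : ℝ} (hr : r ∈ lipSet o parent depth k f) :
    0 ≤ r := by
  obtain ⟨v, -, rfl⟩ := hr
  exact mul_nonneg (norm_nonneg _) (Lam_natCast_nonneg k _)

lemma sSup_lipSet_nonneg (k : ℕ) (f : V → ℂ) : 0 ≤ sSup (lipSet o parent depth k f) :=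
  Real.sSup_nonneg fun _ => nonneg_of_mem_lipSet

lemma lipNorm_nonneg (k : ℕ) (f : V → ℂ) : 0 ≤ lipNorm o parent depth k f :=
  add_nonneg (norm_nonneg _) (sSup_lipSet_nonneg k f)

lemma norm_le_lipNorm (k : ℕ) (f : V → ℂ) : ‖f o‖ ≤ lipNorm o parent depth k f :=
  le_add_of_nonneg_right (sSup_lipSet_nonneg k f)

lemma norm_Der_mul_Lam_le_lipNorm {k : ℕ} {f : V → ℂ}
    (hf : BddAbove (lipSet o parent depth k f)) {v : V} (hv : v ≠ o) :
    ‖Der parent f v‖ * Lam k (depth v) ≤ lipNorm o parent depth k f :=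
  (le_csSup hf ⟨v, hv, rfl⟩).trans (le_add_of_nonneg_left (norm_nonneg _))

lemma bddAbove_lipSet_and_lipNorm_le {k : ℕ} {f : V → ℂ} {a b : ℝ} (ha : ‖f o‖ ≤ a)
    (hb : 0 ≤ b) (hder : ∀ v, v ≠ o → ‖Der parent f v‖ * Lam k (depth v) ≤ b) :
    BddAbove (lipSet o parent depth k f) ∧ lipNorm o parent depth k f ≤ a + b := by
  have hle : ∀ r ∈ lipSet o parent depth k f, r ≤ b := by
    rintro r ⟨v, hv, rfl⟩
    exact hder v hv
  exact ⟨⟨b, hle⟩, add_le_add ha (Real.sSup_le hle hb)⟩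

lemma norm_le_add_mul_ell (hdepth0 : depth o = 0)
    (hdepth : ∀ v, v ≠ o → depth v = depth (parent v) + 1) {k : ℕ} {f : V → ℂ} {s : ℝ}
    (hs : ∀ w, w ≠ o → ‖Der parent f w‖ * Lam k (depth w) ≤ s) {v : V} (hv : v ≠ o) :
    ‖f v‖ ≤ ‖f o‖ + s * ell k (depth v) := by
  have hs0 : 0 ≤ s := (mul_nonneg (norm_nonneg _) (Lam_natCast_nonneg k _)).trans (hs v hv)
  have hstep : ∀ w, w ≠ o → ‖f w‖ ≤ ‖f (parent w)‖ + s * (Lam k (depth w))⁻¹ := fun w hw =>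
    (norm_le_norm_add_norm_sub' (f w) (f (parent w))).trans <| add_le_add_right
      ((le_mul_inv_iff₀ (Lam_pos k (one_le_depth hdepth hw))).2 (hs w hw)) _
  obtain ⟨d, hd⟩ : ∃ d, depth v = d + 1 := ⟨_, hdepth v hv⟩
  induction d generalizing v with
  | zero =>
    have hpv : parent v = o :=
      (depth_eq_zero_iff hdepth0 hdepth).1 (by rw [hdepth v hv] at hd; omega)
    simpa [hd, hpv, ell_one, Lam_one] using hstep v hv
  | succ d ih =>
    have hpd : depth (parent v) = d + 1 := by rw [hdepth v hv] at hd; omega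
    have hpv : parent v ≠ o := fun h => by simp [h, hdepth0] at hpd
    have hell := inv_Lam_add_one_le_ell_sub k (le_add_of_nonneg_left (d.cast_nonneg : (0 : ℝ) ≤ d))
    calc ‖f v‖ ≤ ‖f (parent v)‖ + s * (Lam k (depth v))⁻¹ := hstep v hv
      _ ≤ ‖f o‖ + s * ell k (depth (parent v)) + s * (Lam k (depth v))⁻¹ := by
          gcongr; exact ih hpv hpd
      _ ≤ ‖f o‖ + s * ell k (depth v) := by
          rw [hd, hpd, add_assoc, ← mul_add]
          push_cast
          gcongr
          linarith

end Tree

section Multiplier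

variable {V : Type*}

def muSet (o : V) (parent : V → V) (depth : V → ℕ) (ψ : V → ℂ) (m n : ℕ) : Set ℝ :=
  {r | ∃ v, v ≠ o ∧ r = ‖Der parent ψ v‖ * ell m (depth v) * Lam n (depth v)}

def nuSet (o : V) (parent : V → V) (depth : V → ℕ) (ψ : V → ℂ) (m n : ℕ) : Set ℝ :=
  {r | ∃ v, v ≠ o ∧ r = ‖ψ (parent v)‖ * Lam n (depth v) / Lam m (depth v)}

/-- `C` bounds the multiplication operator `M_ψ : L^(m) → L^(n)`. -/
def IsMultiplierBound (o : V) (parent : V → V) (depth : V → ℕ) (ψ : V → ℂ) (m n : ℕ)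
    (C : ℝ) : Prop :=
  ∀ f : V → ℂ, BddAbove (lipSet o parent depth m f) →
    BddAbove (lipSet o parent depth n (fun v => ψ v * f v)) ∧
    lipNorm o parent depth n (fun v => ψ v * f v) ≤ C * lipNorm o parent depth m f

noncomputable def truncEll (depth : V → ℕ) (m N : ℕ) (x : V) : ℂ :=
  (ell m (min (depth x) N : ℕ) : ℂ)

variable {o : V} {parent : V → V} {depth : V → ℕ} {ψ : V → ℂ} {m n : ℕ}

lemma sSup_muSet_nonneg : 0 ≤ sSup (muSet o parent depth ψ m n) := by
  refine Real.sSup_nonneg ?_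
  rintro r ⟨v, -, rfl⟩
  have := ell_natCast_nonneg m (depth v)
  have := Lam_natCast_nonneg n (depth v)
  positivity

lemma sSup_nuSet_nonneg : 0 ≤ sSup (nuSet o parent depth ψ m n) := by
  refine Real.sSup_nonneg ?_
  rintro r ⟨v, -, rfl⟩
  have := Lam_natCast_nonneg n (depth v)
  have := Lam_natCast_nonneg m (depth v)
  positivity

lemma norm_le_lipNorm_mul_ell (hdepth0 : depth o = 0)
    (hdepth : ∀ v, v ≠ o → depth v = depth (parent v) + 1) {f : V → ℂ}
    (hf : BddAbove (lipSet o parent depth m f)) {v : V} (hv : v ≠ o) :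
    ‖f v‖ ≤ lipNorm o parent depth m f * ell m (depth v) := by
  have hs : ∀ w, w ≠ o → ‖Der parent f w‖ * Lam m (depth w) ≤ sSup (lipSet o parent depth m f) :=
    fun w hw => le_csSup hf ⟨w, hw, rfl⟩
  have hell := one_le_ell m (one_le_depth hdepth hv)
  calc ‖f v‖ ≤ ‖f o‖ + sSup (lipSet o parent depth m f) * ell m (depth v) :=
        norm_le_add_mul_ell hdepth0 hdepth hs hv
    _ ≤ lipNorm o parent depth m f * ell m (depth v) := by
        rw [lipNorm, add_mul]
        gcongr
        exact le_mul_of_one_le_right (norm_nonneg _) hell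

lemma norm_Der_mul_mul_Lam_le_sSup (hdepth0 : depth o = 0)
    (hdepth : ∀ v, v ≠ o → depth v = depth (parent v) + 1)
    (hμ : BddAbove (muSet o parent depth ψ m n)) (hν : BddAbove (nuSet o parent depth ψ m n))
    {f : V → ℂ} (hf : BddAbove (lipSet o parent depth m f)) {v : V} (hv : v ≠ o) :
    ‖Der parent (fun x => ψ x * f x) v‖ * Lam n (depth v) ≤
      (sSup (muSet o parent depth ψ m n) + sSup (nuSet o parent depth ψ m n)) *
        lipNorm o parent depth m f := by
  set F := lipNorm o parent depth m f
  have hLm := Lam_pos m (one_le_depth hdepth hv)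
  have hLn := Lam_pos n (one_le_depth hdepth hv)
  have hμv : ‖Der parent ψ v‖ * ell m (depth v) * Lam n (depth v) ≤
      sSup (muSet o parent depth ψ m n) := le_csSup hμ ⟨v, hv, rfl⟩
  have hνv : ‖ψ (parent v)‖ * Lam n (depth v) / Lam m (depth v) ≤
      sSup (nuSet o parent depth ψ m n) := le_csSup hν ⟨v, hv, rfl⟩
  have hf'v := norm_Der_mul_Lam_le_lipNorm hf hv
  calc ‖Der parent (fun x => ψ x * f x) v‖ * Lam n (depth v)
      ≤ (‖Der parent ψ v‖ * ‖f v‖ + ‖ψ (parent v)‖ * ‖Der parent f v‖) * Lam n (depth v) := by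
        rw [Der_mul, ← norm_mul, ← norm_mul]
        gcongr
        exact norm_add_le _ _
    _ = ‖Der parent ψ v‖ * Lam n (depth v) * ‖f v‖ +
        ‖ψ (parent v)‖ * Lam n (depth v) / Lam m (depth v) *
          (‖Der parent f v‖ * Lam m (depth v)) := by
        field_simp
    _ ≤ ‖Der parent ψ v‖ * Lam n (depth v) * (F * ell m (depth v)) +
        sSup (nuSet o parent depth ψ m n) * F := by
        gcongr
        · exact norm_le_lipNorm_mul_ell hdepth0 hdepth hf hv
        · exact sSup_nuSet_nonneg
    _ = ‖Der parent ψ v‖ * ell m (depth v) * Lam n (depth v) * F +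
        sSup (nuSet o parent depth ψ m n) * F := by ring
    _ ≤ _ := by
        rw [add_mul]
        gcongr
        exact lipNorm_nonneg m f

theorem isMultiplierBound_of_bddAbove (hdepth0 : depth o = 0)
    (hdepth : ∀ v, v ≠ o → depth v = depth (parent v) + 1)
    (hμ : BddAbove (muSet o parent depth ψ m n)) (hν : BddAbove (nuSet o parent depth ψ m n)) :
    IsMultiplierBound o parent depth ψ m n
      (‖ψ o‖ + sSup (muSet o parent depth ψ m n) + sSup (nuSet o parent depth ψ m n)) := by
  intro f hf
  have hroot : ‖ψ o * f o‖ ≤ ‖ψ o‖ * lipNorm o parent depth m f := by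
    rw [norm_mul]
    exact mul_le_mul_of_nonneg_left (norm_le_lipNorm m f) (norm_nonneg _)
  have hb : 0 ≤ (sSup (muSet o parent depth ψ m n) + sSup (nuSet o parent depth ψ m n)) *
      lipNorm o parent depth m f :=
    mul_nonneg (add_nonneg sSup_muSet_nonneg sSup_nuSet_nonneg) (lipNorm_nonneg m f)
  have h := bddAbove_lipSet_and_lipNorm_le (f := fun v => ψ v * f v) hroot hb
    fun v hv => norm_Der_mul_mul_Lam_le_sSup hdepth0 hdepth hμ hν hf hv
  refine ⟨h.1, h.2.trans_eq ?_⟩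
  ring

end Multiplier

section Necessity

variable {V : Type*} {o : V} {parent : V → V} {depth : V → ℕ} {ψ : V → ℂ} {m n : ℕ} {C : ℝ}

lemma bddAbove_lipSet_const (k : ℕ) (c : ℂ) :
    BddAbove (lipSet o parent depth k (fun _ => c)) :=
  (bddAbove_lipSet_and_lipNorm_le le_rfl le_rfl fun v _ => by simp [Der]).1

lemma lipNorm_const (k : ℕ) (c : ℂ) : lipNorm o parent depth k (fun _ => c) = ‖c‖ := by
  refine le_antisymm ?_ (norm_le_lipNorm k fun _ : V => c)
  simpa using (bddAbove_lipSet_and_lipNorm_le (f := fun _ : V => c) (k := k) (o := o)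
    (parent := parent) (depth := depth) le_rfl le_rfl fun v _ => by simp [Der]).2

lemma truncEll_of_depth_le (N : ℕ) {x : V} (h : depth x ≤ N) :
    truncEll depth m N x = ell m (depth x) := by
  rw [truncEll, min_eq_left h]

lemma truncEll_of_le_depth (N : ℕ) {x : V} (h : N ≤ depth x) :
    truncEll depth m N x = ell m N := by
  rw [truncEll, min_eq_right h]

lemma lipNorm_truncEll_le (hdepth0 : depth o = 0)
    (hdepth : ∀ v, v ≠ o → depth v = depth (parent v) + 1) (N : ℕ) :
    BddAbove (lipSet o parent depth m (truncEll depth m N)) ∧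
      lipNorm o parent depth m (truncEll depth m N) ≤ 1 + 2 ^ m := by
  refine bddAbove_lipSet_and_lipNorm_le ?_ (by positivity) fun w hw => ?_
  · rw [truncEll_of_depth_le N (hdepth0.trans_le N.zero_le),
      Complex.norm_of_nonneg (ell_natCast_nonneg m _), hdepth0, Nat.cast_zero]
    exact ell_zero_le_one m
  · have hw' := hdepth w hw
    rcases lt_or_ge (depth (parent w)) N with hN | hN
    · rw [Der, truncEll_of_depth_le N (by omega), truncEll_of_depth_le N hN.le, hw',
        ← Complex.ofReal_sub, Complex.norm_real, Real.norm_eq_abs, Nat.cast_succ]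
      exact abs_ell_natCast_add_one_sub_mul_Lam_le m _
    · rw [Der, truncEll_of_le_depth N (by omega), truncEll_of_le_depth N hN, sub_self,
        norm_zero, zero_mul]
      positivity

namespace IsMultiplierBound

lemma lipNorm_le (hC : IsMultiplierBound o parent depth ψ m n C) :
    BddAbove (lipSet o parent depth n ψ) ∧ lipNorm o parent depth n ψ ≤ C := by
  simpa [lipNorm_const] using hC (fun _ => 1) (bddAbove_lipSet_const m 1)

lemma nonneg (hC : IsMultiplierBound o parent depth ψ m n C) : 0 ≤ C :=
  (lipNorm_nonneg n ψ).trans hC.lipNorm_le.2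

lemma norm_Der_mul_Lam_le (hC : IsMultiplierBound o parent depth ψ m n C) {f : V → ℂ}
    (hf : BddAbove (lipSet o parent depth m f)) {v : V} (hv : v ≠ o) :
    ‖Der parent (fun x => ψ x * f x) v‖ * Lam n (depth v) ≤ C * lipNorm o parent depth m f :=
  (norm_Der_mul_Lam_le_lipNorm (hC f hf).1 hv).trans (hC f hf).2

lemma norm_Der_mul_truncEll_mul_Lam_le (hdepth0 : depth o = 0)
    (hdepth : ∀ v, v ≠ o → depth v = depth (parent v) + 1)
    (hC : IsMultiplierBound o parent depth ψ m n C) (N : ℕ) {v : V} (hv : v ≠ o) :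
    ‖Der parent (fun x => ψ x * truncEll depth m N x) v‖ * Lam n (depth v) ≤
      C * (1 + 2 ^ m) :=
  (hC.norm_Der_mul_Lam_le (lipNorm_truncEll_le hdepth0 hdepth N).1 hv).trans <|
    mul_le_mul_of_nonneg_left (lipNorm_truncEll_le hdepth0 hdepth N).2 hC.nonneg

lemma norm_Der_mul_ell_mul_Lam_le (hdepth0 : depth o = 0)
    (hdepth : ∀ v, v ≠ o → depth v = depth (parent v) + 1)
    (hC : IsMultiplierBound o parent depth ψ m n C) {v : V} (hv : v ≠ o) :
    ‖Der parent ψ v‖ * ell m (depth v) * Lam n (depth v) ≤ C * (2 + 2 ^ m) := by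
  set d := depth (parent v)
  have hd : depth v = d + 1 := hdepth v hv
  have hg : Der parent (truncEll depth m d) v = 0 := by
    rw [Der, truncEll_of_le_depth d (by omega), truncEll_of_le_depth d le_rfl, sub_self]
  have hDer : Der parent (fun x => ψ x * truncEll depth m d x) v = Der parent ψ v * ell m d := by
    rw [Der_mul, hg, truncEll_of_le_depth d (by omega), mul_zero, add_zero]
  have htest := hC.norm_Der_mul_truncEll_mul_Lam_le hdepth0 hdepth d hv
  rw [hDer, norm_mul, Complex.norm_of_nonneg (ell_natCast_nonneg m d)] at htest
  have hψ : ‖Der parent ψ v‖ * Lam n (depth v) ≤ C :=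
    (norm_Der_mul_Lam_le_lipNorm hC.lipNorm_le.1 hv).trans hC.lipNorm_le.2
  calc ‖Der parent ψ v‖ * ell m (depth v) * Lam n (depth v)
      ≤ ‖Der parent ψ v‖ * (ell m d + 1) * Lam n (depth v) := by
        gcongr
        · exact Lam_natCast_nonneg n _
        · rw [hd, Nat.cast_succ]
          exact ell_natCast_add_one_le m d
    _ = ‖Der parent ψ v‖ * ell m d * Lam n (depth v) + ‖Der parent ψ v‖ * Lam n (depth v) := by
        ring
    _ ≤ C * (1 + 2 ^ m) + C := add_le_add htest hψ
    _ = C * (2 + 2 ^ m) := by ring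

lemma norm_mul_Lam_div_Lam_le (hdepth0 : depth o = 0)
    (hdepth : ∀ v, v ≠ o → depth v = depth (parent v) + 1)
    (hC : IsMultiplierBound o parent depth ψ m n C) {v : V} (hv : v ≠ o) :
    ‖ψ (parent v)‖ * Lam n (depth v) / Lam m (depth v) ≤ C * (3 + 2 * 2 ^ m) := by
  set d := depth (parent v)
  have hd : depth v = d + 1 := hdepth v hv
  have hC0 := hC.nonneg
  rcases Nat.eq_zero_or_pos d with hd0 | hd1
  · have hpv : parent v = o := (depth_eq_zero_iff hdepth0 hdepth).1 hd0
    rw [hpv, hd, hd0, zero_add, Nat.cast_one, Lam_one, Lam_one, mul_one, div_one]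
    calc ‖ψ o‖ ≤ C := (norm_le_lipNorm n ψ).trans hC.lipNorm_le.2
      _ ≤ C * (3 + 2 * 2 ^ m) := le_mul_of_one_le_right hC0 (by
          have : (0 : ℝ) ≤ 2 * 2 ^ m := by positivity
          linarith)
  · have ha : (1 : ℝ) ≤ d := by exact_mod_cast hd1
    set Δ := ell m ((d : ℝ) + 1) - ell m d
    have hΔ : (Lam m (depth v))⁻¹ ≤ Δ := by
      rw [hd, Nat.cast_succ]
      exact inv_Lam_add_one_le_ell_sub m ha
    have hΔ0 : 0 ≤ Δ := (inv_nonneg.2 (Lam_natCast_nonneg m _)).trans hΔ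
    have hg : Der parent (truncEll depth m (d + 1)) v = Δ := by
      rw [Der, truncEll_of_depth_le (d + 1) hd.le, truncEll_of_depth_le (d + 1) (Nat.le_succ d),
        hd, Nat.cast_succ, Complex.ofReal_sub]
    have hDer : Der parent (fun x => ψ x * truncEll depth m (d + 1) x) v =
        Der parent ψ v * ell m (depth v) + ψ (parent v) * Δ := by
      rw [Der_mul, hg, truncEll_of_depth_le (d + 1) hd.le]
    have hψΔ : ‖ψ (parent v)‖ * Δ ≤
        ‖Der parent (fun x => ψ x * truncEll depth m (d + 1) x) v‖ +
          ‖Der parent ψ v‖ * ell m (depth v) := by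
      calc ‖ψ (parent v)‖ * Δ
          = ‖Der parent (fun x => ψ x * truncEll depth m (d + 1) x) v -
              Der parent ψ v * ell m (depth v)‖ := by
            rw [hDer, add_sub_cancel_left, norm_mul, Complex.norm_of_nonneg hΔ0]
        _ ≤ _ := norm_sub_le _ _
        _ = _ := by rw [norm_mul, Complex.norm_of_nonneg (ell_natCast_nonneg m _)]
    have htest := hC.norm_Der_mul_truncEll_mul_Lam_le hdepth0 hdepth (d + 1) hv
    have hμ := hC.norm_Der_mul_ell_mul_Lam_le hdepth0 hdepth hv
    calc ‖ψ (parent v)‖ * Lam n (depth v) / Lam m (depth v)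
        = ‖ψ (parent v)‖ * (Lam m (depth v))⁻¹ * Lam n (depth v) := by ring
      _ ≤ ‖ψ (parent v)‖ * Δ * Lam n (depth v) := by
        gcongr
        exact Lam_natCast_nonneg n _
      _ ≤ (‖Der parent (fun x => ψ x * truncEll depth m (d + 1) x) v‖ +
          ‖Der parent ψ v‖ * ell m (depth v)) * Lam n (depth v) := by
        gcongr
        exact Lam_natCast_nonneg n _
      _ ≤ C * (1 + 2 ^ m) + C * (2 + 2 ^ m) := by
        rw [add_mul]
        exact add_le_add htest hμ
      _ = C * (3 + 2 * 2 ^ m) := by ring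

lemma bddAbove_muSet (hdepth0 : depth o = 0)
    (hdepth : ∀ v, v ≠ o → depth v = depth (parent v) + 1)
    (hC : IsMultiplierBound o parent depth ψ m n C) : BddAbove (muSet o parent depth ψ m n) := by
  refine ⟨C * (2 + 2 ^ m), ?_⟩
  rintro r ⟨v, hv, rfl⟩
  exact hC.norm_Der_mul_ell_mul_Lam_le hdepth0 hdepth hv

lemma bddAbove_nuSet (hdepth0 : depth o = 0)
    (hdepth : ∀ v, v ≠ o → depth v = depth (parent v) + 1)
    (hC : IsMultiplierBound o parent depth ψ m n C) : BddAbove (nuSet o parent depth ψ m n) := by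
  refine ⟨C * (3 + 2 * 2 ^ m), ?_⟩
  rintro r ⟨v, hv, rfl⟩
  exact hC.norm_mul_Lam_div_Lam_le hdepth0 hdepth hv

end IsMultiplierBound

end Necessity

theorem mult_bounded_iff_general {V : Type*} (o : V) (parent : V → V) (depth : V → ℕ)
    (hdepth0 : depth o = 0)
    (hdepth : ∀ v, v ≠ o → depth v = depth (parent v) + 1)
    (ψ : V → ℂ) (m n : ℕ) :
    ((∃ C : ℝ, ∀ f : V → ℂ, BddAbove (lipSet o parent depth m f) →
        BddAbove (lipSet o parent depth n (fun v => ψ v * f v)) ∧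
        lipNorm o parent depth n (fun v => ψ v * f v) ≤ C * lipNorm o parent depth m f) ↔
      (BddAbove {r : ℝ | ∃ v, v ≠ o ∧
          r = ‖Der parent ψ v‖ * ell m (depth v) * Lam n (depth v)} ∧
        BddAbove {r : ℝ | ∃ v, v ≠ o ∧
          r = ‖ψ (parent v)‖ * Lam n (depth v) / Lam m (depth v)})) ∧
    (∀ C : ℝ, (∀ f : V → ℂ, BddAbove (lipSet o parent depth m f) →
        BddAbove (lipSet o parent depth n (fun v => ψ v * f v)) ∧
        lipNorm o parent depth n (fun v => ψ v * f v) ≤ C * lipNorm o parent depth m f) →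
      lipNorm o parent depth n ψ ≤ C) ∧
    ((BddAbove {r : ℝ | ∃ v, v ≠ o ∧
          r = ‖Der parent ψ v‖ * ell m (depth v) * Lam n (depth v)} ∧
        BddAbove {r : ℝ | ∃ v, v ≠ o ∧
          r = ‖ψ (parent v)‖ * Lam n (depth v) / Lam m (depth v)}) →
      ∀ f : V → ℂ, BddAbove (lipSet o parent depth m f) →
        BddAbove (lipSet o parent depth n (fun v => ψ v * f v)) ∧
        lipNorm o parent depth n (fun v => ψ v * f v) ≤
          (‖ψ o‖ +
            sSup {r : ℝ | ∃ v, v ≠ o ∧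
              r = ‖Der parent ψ v‖ * ell m (depth v) * Lam n (depth v)} +
            sSup {r : ℝ | ∃ v, v ≠ o ∧
              r = ‖ψ (parent v)‖ * Lam n (depth v) / Lam m (depth v)}) *
            lipNorm o parent depth m f) := by
  have sufficient : BddAbove (muSet o parent depth ψ m n) ∧ BddAbove (nuSet o parent depth ψ m n) →
      IsMultiplierBound o parent depth ψ m n
        (‖ψ o‖ + sSup (muSet o parent depth ψ m n) + sSup (nuSet o parent depth ψ m n)) :=
    fun ⟨hμ, hν⟩ => isMultiplierBound_of_bddAbove hdepth0 hdepth hμ hν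
  have necessary : ∀ C, IsMultiplierBound o parent depth ψ m n C →
      BddAbove (muSet o parent depth ψ m n) ∧ BddAbove (nuSet o parent depth ψ m n) :=
    fun _ hC => ⟨hC.bddAbove_muSet hdepth0 hdepth, hC.bddAbove_nuSet hdepth0 hdepth⟩
  exact ⟨⟨fun ⟨C, hC⟩ => necessary C hC, fun h => ⟨_, sufficient h⟩⟩,
    fun _ hC => (IsMultiplierBound.lipNorm_le hC).2, sufficient⟩

/-- M_ψ : L^(m) → L^(n) is bounded iff μ_{ψ,m,n} and ν_{ψ,m,n} are both finite;
moreover ‖ψ‖_n ≤ ‖M_ψ‖ and |ψ(o)| + μ + ν is a bound for M_ψ. -/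
theorem mult_bounded_iff {V : Type*} (o : V) (parent : V → V) (depth : V → ℕ)
    (hpar : parent o = o) (hdepth0 : depth o = 0)
    (hdepth : ∀ v, v ≠ o → depth v = depth (parent v) + 1)
    (hchild : ∀ v, ∃ w, w ≠ o ∧ parent w = v)
    (ψ : V → ℂ) (m n : ℕ) (hmn : m ≠ n) :
    ((∃ C : ℝ, ∀ f : V → ℂ, BddAbove (lipSet o parent depth m f) →
        BddAbove (lipSet o parent depth n (fun v => ψ v * f v)) ∧
        lipNorm o parent depth n (fun v => ψ v * f v) ≤ C * lipNorm o parent depth m f) ↔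
      (BddAbove {r : ℝ | ∃ v, v ≠ o ∧
          r = ‖Der parent ψ v‖ * ell m (depth v) * Lam n (depth v)} ∧
        BddAbove {r : ℝ | ∃ v, v ≠ o ∧
          r = ‖ψ (parent v)‖ * Lam n (depth v) / Lam m (depth v)})) ∧
    (∀ C : ℝ, (∀ f : V → ℂ, BddAbove (lipSet o parent depth m f) →
        BddAbove (lipSet o parent depth n (fun v => ψ v * f v)) ∧
        lipNorm o parent depth n (fun v => ψ v * f v) ≤ C * lipNorm o parent depth m f) →
      lipNorm o parent depth n ψ ≤ C) ∧
    ((BddAbove {r : ℝ | ∃ v, v ≠ o ∧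
          r = ‖Der parent ψ v‖ * ell m (depth v) * Lam n (depth v)} ∧
        BddAbove {r : ℝ | ∃ v, v ≠ o ∧
          r = ‖ψ (parent v)‖ * Lam n (depth v) / Lam m (depth v)}) →
      ∀ f : V → ℂ, BddAbove (lipSet o parent depth m f) →
        BddAbove (lipSet o parent depth n (fun v => ψ v * f v)) ∧
        lipNorm o parent depth n (fun v => ψ v * f v) ≤
          (‖ψ o‖ +
            sSup {r : ℝ | ∃ v, v ≠ o ∧
              r = ‖Der parent ψ v‖ * ell m (depth v) * Lam n (depth v)} +
            sSup {r : ℝ | ∃ v, v ≠ o ∧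
              r = ‖ψ (parent v)‖ * Lam n (depth v) / Lam m (depth v)}) *
            lipNorm o parent depth m f) :=
  mult_bounded_iff_general o parent depth hdepth0 hdepth ψ m n
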